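/- arXiv:2506.05144 — 2 statements merged into one kernel-verified Lean document; each statement's English description precedes it below -/
import Mathlib

section
/- Let λ₀ ∈ ℂ with Im λ₀ > 0 and λ₀ ≠ i. Then the c-entropy S_a := -Real.log|(λ₀+i)/(conj(λ₀)+i)| - Real.log|(conj(λ₀)-i)/(λ₀-i)| equals Real.log((|λ₀|² - 2·Im λ₀ + 1)/(|λ₀|² + 2·Im λ₀ + 1)), and this value is negative. -/
open Complex ComplexConjugate

/-!
Both factors of `W(-i)` have modulus `q⁻¹` with `q = ‖λ₀ - i‖ / ‖λ₀ + i‖`, because conjugation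
swaps `conj λ₀ + i` with `λ₀ - i` and `conj λ₀ - i` with `λ₀ + i`. Hence the c-entropy is
`log (q ^ 2)`, and `q ^ 2` is the stated quotient. For `Im λ₀ > 0` the point `λ₀` is closer to `i`
than to `-i`, so `0 < q < 1` and the entropy is negative.
-/

namespace Complex

theorem norm_conj_add_I (z : ℂ) : ‖conj z + I‖ = ‖z - I‖ := by
  rw [← norm_conj, map_add, conj_conj, conj_I, ← sub_eq_add_neg]

theorem norm_conj_sub_I (z : ℂ) : ‖conj z - I‖ = ‖z + I‖ := by
  rw [← norm_conj, map_sub, conj_conj, conj_I, sub_neg_eq_add]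

theorem sq_norm_add_I (z : ℂ) : ‖z + I‖ ^ 2 = ‖z‖ ^ 2 + 2 * z.im + 1 := by
  simp only [Complex.sq_norm, normSq_apply, add_re, add_im, I_re, I_im]
  ring

theorem sq_norm_sub_I (z : ℂ) : ‖z - I‖ ^ 2 = ‖z‖ ^ 2 - 2 * z.im + 1 := by
  simp only [Complex.sq_norm, normSq_apply, sub_re, sub_im, I_re, I_im]
  ring

theorem norm_sub_I_lt_norm_add_I {z : ℂ} (hz : 0 < z.im) : ‖z - I‖ < ‖z + I‖ := by
  refine lt_of_pow_lt_pow_left₀ 2 (norm_nonneg _) ?_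
  rw [sq_norm_sub_I, sq_norm_add_I]
  linarith

end Complex

theorem stmt_7 (l : ℂ) (hl : 0 < l.im) (hne : l ≠ Complex.I) :
    (-Real.log (‖(l + Complex.I) / ((starRingEnd ℂ) l + Complex.I)‖)
      - Real.log (‖((starRingEnd ℂ) l - Complex.I) / (l - Complex.I)‖) =
      Real.log ((‖l‖ ^ 2 - 2 * l.im + 1) / (‖l‖ ^ 2 + 2 * l.im + 1))) ∧
    Real.log ((‖l‖ ^ 2 - 2 * l.im + 1) / (‖l‖ ^ 2 + 2 * l.im + 1)) < 0 := by
  set q := ‖l - I‖ / ‖l + I‖ with hq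
  have hquot : (‖l‖ ^ 2 - 2 * l.im + 1) / (‖l‖ ^ 2 + 2 * l.im + 1) = q ^ 2 := by
    rw [hq, div_pow, sq_norm_sub_I, sq_norm_add_I]
  have hfactors : ‖(l + I) / (conj l + I)‖ = q⁻¹ ∧ ‖(conj l - I) / (l - I)‖ = q⁻¹ := by
    rw [hq, inv_div, norm_div, norm_div, norm_conj_add_I, norm_conj_sub_I]
    exact ⟨rfl, rfl⟩
  have hcloser := norm_sub_I_lt_norm_add_I hl
  have hq_pos : 0 < q :=
    div_pos (norm_pos_iff.mpr (sub_ne_zero.mpr hne)) ((norm_nonneg _).trans_lt hcloser)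
  have hq_lt_one : q < 1 := (div_lt_one ((norm_nonneg _).trans_lt hcloser)).mpr hcloser
  rw [hquot, hfactors.1, hfactors.2]
  refine ⟨?_, Real.log_neg (pow_pos hq_pos 2) (pow_lt_one₀ hq_pos.le hq_lt_one two_ne_zero)⟩
  rw [Real.log_inv, Real.log_pow]
  push_cast
  ring
end

section
/- Let λ₁, λ₂, μ₁, μ₂ ∈ ℂ with positive imaginary parts and let z ∈ ℂ avoid {λ₁, λ₂, μ₁, μ₂}. With T, K as in the coupling construction, the 2×2 transfer matrix W_Θ(z) = I - 2i·K*·(T - zI)⁻¹·K equals the product W₁(z)·W₂(z), where W_j(z) = diag((conj(λ_j)-z)/(λ_j-z), (conj(μ_j)-z)/(μ_j-z)) for j = 1, 2. -/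
open Matrix

set_option maxHeartbeats 1000000

theorem stmt_16 (l1 l2 m1 m2 : ℂ) (hl1 : 0 < l1.im) (hl2 : 0 < l2.im)
    (hm1 : 0 < m1.im) (hm2 : 0 < m2.im)
    (z : ℂ) (hz1 : z ≠ l1) (hz2 : z ≠ l2) (hz3 : z ≠ m1) (hz4 : z ≠ m2)
    (T : Matrix (Fin 4) (Fin 4) ℂ)
    (hT : T = !![l1, 0, 2 * Complex.I * (Real.sqrt (l1.im * l2.im) : ℂ), 0;
                 0, m1, 0, 2 * Complex.I * (Real.sqrt (m1.im * m2.im) : ℂ);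
                 0, 0, l2, 0;
                 0, 0, 0, m2])
    (K : Matrix (Fin 4) (Fin 2) ℂ)
    (hK : K = !![(Real.sqrt l1.im : ℂ), 0;
                 0, (Real.sqrt m1.im : ℂ);
                 (Real.sqrt l2.im : ℂ), 0;
                 0, (Real.sqrt m2.im : ℂ)])
    (W1 W2 : Matrix (Fin 2) (Fin 2) ℂ)
    (hW1 : W1 = !![((starRingEnd ℂ) l1 - z) / (l1 - z), 0;
                   0, ((starRingEnd ℂ) m1 - z) / (m1 - z)])
    (hW2 : W2 = !![((starRingEnd ℂ) l2 - z) / (l2 - z), 0;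
                   0, ((starRingEnd ℂ) m2 - z) / (m2 - z)]) :
    (1 : Matrix (Fin 2) (Fin 2) ℂ) - (2 * Complex.I) • (Kᴴ * (T - z • 1)⁻¹ * K) =
      W1 * W2 := by
  set a1 : ℝ := Real.sqrt l1.im with ha1def
  set a2 : ℝ := Real.sqrt m1.im with ha2def
  set a3 : ℝ := Real.sqrt l2.im with ha3def
  set a4 : ℝ := Real.sqrt m2.im with ha4def
  have hs1 : Real.sqrt (l1.im * l2.im) = a1 * a3 := Real.sqrt_mul hl1.le _
  have hs2 : Real.sqrt (m1.im * m2.im) = a2 * a4 := Real.sqrt_mul hm1.le _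
  have hq1 : ((a1 : ℂ)) ^ 2 = (l1.im : ℂ) := by
    norm_cast; exact Real.sq_sqrt hl1.le
  have hq2 : ((a2 : ℂ)) ^ 2 = (m1.im : ℂ) := by
    norm_cast; exact Real.sq_sqrt hm1.le
  have hq3 : ((a3 : ℂ)) ^ 2 = (l2.im : ℂ) := by
    norm_cast; exact Real.sq_sqrt hl2.le
  have hq4 : ((a4 : ℂ)) ^ 2 = (m2.im : ℂ) := by
    norm_cast; exact Real.sq_sqrt hm2.le
  have hd1 : l1 - z ≠ 0 := sub_ne_zero.mpr (Ne.symm hz1)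
  have hd2 : m1 - z ≠ 0 := sub_ne_zero.mpr (Ne.symm hz3)
  have hd3 : l2 - z ≠ 0 := sub_ne_zero.mpr (Ne.symm hz2)
  have hd4 : m2 - z ≠ 0 := sub_ne_zero.mpr (Ne.symm hz4)
  have hconj : ∀ w : ℂ, (starRingEnd ℂ) w = w - 2 * (w.im : ℂ) * Complex.I := by
    intro w
    apply Complex.ext <;> simp <;> ring
  set M : Matrix (Fin 4) (Fin 4) ℂ :=
    !![(l1 - z)⁻¹, 0, -(2 * Complex.I * (a1 * a3)) / ((l1 - z) * (l2 - z)), 0;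
       0, (m1 - z)⁻¹, 0, -(2 * Complex.I * (a2 * a4)) / ((m1 - z) * (m2 - z));
       0, 0, (l2 - z)⁻¹, 0;
       0, 0, 0, (m2 - z)⁻¹] with hM
  have hTz : T - z • 1 =
      !![l1 - z, 0, 2 * Complex.I * ((a1 : ℂ) * a3), 0;
         0, m1 - z, 0, 2 * Complex.I * ((a2 : ℂ) * a4);
         0, 0, l2 - z, 0;
         0, 0, 0, m2 - z] := by
    subst hT
    ext i j
    fin_cases i <;> fin_cases j <;>
      simp [Matrix.sub_apply, Matrix.smul_apply, Matrix.one_apply, hs1, hs2] <;> ring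
  have hinv : (T - z • 1)⁻¹ = M := by
    apply inv_eq_right_inv
    rw [hTz]
    ext i j
    fin_cases i <;> fin_cases j <;>
      simp [hM, Matrix.mul_apply, Fin.sum_univ_four, Matrix.one_apply, Matrix.vecHead, Matrix.vecTail] <;>
      field_simp <;> ring
  subst hK hW1 hW2
  rw [hinv]
  ext i j
  fin_cases i <;> fin_cases j <;>
    simp [hM, Matrix.mul_apply, Fin.sum_univ_four, Matrix.one_apply, hconj,
      Matrix.vecHead, Matrix.vecTail, Complex.conj_ofReal, ← hq1, ← hq2, ← hq3, ← hq4] <;>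
    field_simp <;> ring
end
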